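/- arXiv:2010.05476 — 4 statements merged into one kernel-verified Lean document; each statement's English description precedes it below -/
import Mathlib

section
/- For every c > 0, the function u(x) := x^{(1−α)/2} J_ν(c x^κ) satisfies the degenerate eigenfunction equation d/dx ( x^α u′(x) ) = −(κ c)² u(x) for all x ∈ (0,1). In particular, with c = j_{ν,n}, the function φ_n satisfies (x^α φ_n′)′ = −λ_n φ_n on (0,1). -/
open MeasureTheory Real Set

/-- The Bessel function of the first kind of order `ν ≥ 0`, defined by its power series
`J_ν(x) = ∑_{m≥0} (-1)^m / (m! Γ(m+ν+1)) (x/2)^(2m+ν)`. -/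
noncomputable def besselJ (ν : ℝ) (x : ℝ) : ℝ :=
  ∑' m : ℕ, ((-1 : ℝ) ^ m / ((m.factorial : ℝ) * Real.Gamma ((m : ℝ) + ν + 1))) *
    (x / 2) ^ (2 * (m : ℝ) + ν)

/-!
Expanding `J_ν` termwise, `u(x) = x^((1-α)/2) J_ν(c x^κ)` is the generalized power series
`∑ b_m x^((1-α) + (2-α) m)` with `b_m = (c/2)^(2m+ν) (-1)^m / (m! Γ(m+ν+1))`; the exponents combine
this way because `1 - α = (2-α) ν`. The coefficients decay like `1/m!`, so the series can be
differentiated term by term on `(0, ∞)`. The operator `u ↦ (x^α u')'` annihilates the `m = 0` term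
and maps the `m`-th power to a multiple of the `(m-1)`-st, and `Γ(s+1) = s Γ(s)` turns the shifted
coefficients into `-(κc)² b_m`.
-/

open Filter

lemma rpow_add_mul_natCast {y : ℝ} (hy : 0 < y) (p r : ℝ) (m : ℕ) :
    y ^ (p + r * m) = y ^ p * (y ^ r) ^ m := by
  rw [rpow_add hy, rpow_mul_natCast hy.le]

lemma rpow_le_rpow_add_rpow_of_mem_Icc {a b z : ℝ} (ha : 0 < a) (hz : z ∈ Icc a b) (t : ℝ) :
    z ^ t ≤ a ^ t + b ^ t := by
  have hz0 : 0 < z := ha.trans_le hz.1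
  rcases le_total 0 t with ht | ht
  · linarith [rpow_le_rpow hz0.le hz.2 ht, rpow_nonneg ha.le t]
  · linarith [rpow_le_rpow_of_nonpos ha hz.1 ht, rpow_nonneg (hz0.le.trans hz.2) t]

section EntireCoefficients

variable {a : ℕ → ℝ}

lemma summable_abs_const_mul_mul_pow (ha : ∀ R, Summable fun m => |a m| * R ^ m) (C q R : ℝ) :
    Summable fun m => |C * a m * q ^ m| * R ^ m :=
  ((ha (|q| * R)).mul_left |C|).congr fun m => by
    rw [abs_mul, abs_mul, abs_pow, mul_pow]
    ring

lemma summable_abs_mul_affine_mul_pow (ha : ∀ R, Summable fun m => |a m| * R ^ m)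
    (p r R : ℝ) : Summable fun m : ℕ => |a m * (p + r * m)| * R ^ m := by
  refine .of_norm_bounded ((ha (2 * |R|)).mul_left (|p| + |r|)) fun m => ?_
  have hm : (m : ℝ) ≤ 2 ^ m := by exact_mod_cast m.lt_two_pow_self.le
  have h2 : |p + r * m| ≤ (|p| + |r|) * 2 ^ m :=
    calc |p + r * m| ≤ |p| + |r| * m := by
          simpa [abs_mul] using abs_add_le p (r * m)
      _ ≤ (|p| + |r|) * 2 ^ m := by
          nlinarith [abs_nonneg p, abs_nonneg r, one_le_pow₀ (one_le_two (α := ℝ)) (n := m)]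
  rw [norm_mul, Real.norm_eq_abs, abs_abs, norm_pow, Real.norm_eq_abs, abs_mul, mul_pow]
  calc |a m| * |p + r * m| * |R| ^ m ≤ |a m| * ((|p| + |r|) * 2 ^ m) * |R| ^ m := by gcongr
    _ = _ := by ring

lemma summable_mul_rpow (ha : ∀ R, Summable fun m => |a m| * R ^ m) (p r : ℝ) {y : ℝ}
    (hy : 0 < y) : Summable fun m : ℕ => a m * y ^ (p + r * m) := by
  refine .of_norm_bounded ((ha (y ^ r)).mul_left (y ^ p)) fun m => ?_
  have hpos : 0 < y ^ p * (y ^ r) ^ m := by positivity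
  rw [rpow_add_mul_natCast hy, Real.norm_eq_abs, abs_mul, abs_of_pos hpos]
  exact (mul_left_comm _ _ _).le

theorem hasDerivAt_tsum_mul_rpow (ha : ∀ R, Summable fun m => |a m| * R ^ m) (p r : ℝ)
    {y : ℝ} (hy : 0 < y) :
    HasDerivAt (fun z => ∑' m : ℕ, a m * z ^ (p + r * m))
      (∑' m : ℕ, a m * (p + r * m) * y ^ (p + r * m - 1)) y := by
  have hbound : Summable fun m : ℕ => |a m * (p + r * m)| *
      ((y / 2) ^ (p - 1) * ((y / 2) ^ r) ^ m + (2 * y) ^ (p - 1) * ((2 * y) ^ r) ^ m) :=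
    (((summable_abs_mul_affine_mul_pow ha p r ((y / 2) ^ r)).mul_left
      ((y / 2) ^ (p - 1))).add
      ((summable_abs_mul_affine_mul_pow ha p r ((2 * y) ^ r)).mul_left
        ((2 * y) ^ (p - 1)))).congr fun m => by ring
  have hmem : y ∈ Ioo (y / 2) (2 * y) := ⟨by linarith, by linarith⟩
  refine hasDerivAt_tsum_of_isPreconnected (g := fun m z => a m * z ^ (p + r * m))
    (g' := fun m z => a m * (p + r * m) * z ^ (p + r * m - 1)) hbound isOpen_Ioo
    isPreconnected_Ioo (fun m z hz => ?_) (fun m z hz => ?_) hmem (summable_mul_rpow ha p r hy)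
    hmem
  · have hz0 : 0 < z := by linarith [hz.1]
    simpa only [mul_assoc] using (hasDerivAt_rpow_const (p := p + r * m)
      (Or.inl hz0.ne')).const_mul (a m)
  · have hz0 : 0 < z := by linarith [hz.1]
    have hexp : p + r * m - 1 = (p - 1) + r * m := by ring
    rw [norm_mul, Real.norm_eq_abs, Real.norm_eq_abs, abs_of_pos (rpow_pos_of_pos hz0 _)]
    gcongr
    calc z ^ (p + r * m - 1) ≤ (y / 2) ^ ((p - 1) + r * m) + (2 * y) ^ ((p - 1) + r * m) := by
          rw [hexp]
          exact rpow_le_rpow_add_rpow_of_mem_Icc (by positivity) (Ioo_subset_Icc_self hz) _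
      _ = _ := by rw [rpow_add_mul_natCast (by positivity), rpow_add_mul_natCast (by positivity)]

end EntireCoefficients

theorem deriv_rpow_mul_deriv_eq_neg_mul_of_eq_tsum {a : ℕ → ℝ} {u : ℝ → ℝ} {α μ x : ℝ}
    (ha : ∀ R, Summable fun m => |a m| * R ^ m)
    (hu : ∀ y, 0 < y → u y = ∑' m : ℕ, a m * y ^ ((1 - α) + (2 - α) * m))
    (hrec : ∀ m : ℕ,
      a (m + 1) * ((1 - α) + (2 - α) * (m + 1)) * ((2 - α) * (m + 1)) = -μ * a m)
    (hx : 0 < x) :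
    deriv (fun y => y ^ α * deriv u y) x = -μ * u x := by
  have hflux : ∀ y, 0 < y → y ^ α * deriv u y =
      ∑' m : ℕ, a m * ((1 - α) + (2 - α) * m) * y ^ (0 + (2 - α) * m) := by
    intro y hy
    have hu' := (hasDerivAt_tsum_mul_rpow ha (1 - α) (2 - α) hy).congr_of_eventuallyEq
      (eventually_of_mem (Ioi_mem_nhds hy) hu)
    rw [hu'.deriv, ← tsum_mul_left]
    refine tsum_congr fun m => ?_
    rw [mul_left_comm, ← rpow_add hy]
    ring_nf
  have hv := (hasDerivAt_tsum_mul_rpow (summable_abs_mul_affine_mul_pow ha _ _) 0 (2 - α)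
    hx).congr_of_eventuallyEq (eventually_of_mem (Ioi_mem_nhds hx) hflux)
  have hshift : ∀ m : ℕ, a (m + 1) * ((1 - α) + (2 - α) * (m + 1 : ℕ)) *
      (0 + (2 - α) * (m + 1 : ℕ)) * x ^ (0 + (2 - α) * (m + 1 : ℕ) - 1) =
      -μ * (a m * x ^ ((1 - α) + (2 - α) * m)) := by
    intro m
    rw [show 0 + (2 - α) * ((m + 1 : ℕ) : ℝ) - 1 = (1 - α) + (2 - α) * m by push_cast; ring]
    push_cast
    linear_combination x ^ ((1 - α) + (2 - α) * m) * hrec m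
  rw [hv.deriv, hu x hx, ← tsum_mul_left, tsum_eq_zero_add' ?_]
  · simp only [hshift]
    simp only [CharP.cast_eq_zero, mul_zero, zero_mul, zero_add]
  · simpa only [hshift] using (summable_mul_rpow ha _ _ hx).mul_left (-μ)

open Nat in
noncomputable def besselJCoeff (ν : ℝ) (m : ℕ) : ℝ := (-1) ^ m / (m ! * Gamma (m + ν + 1))

lemma Gamma_le_Gamma_natCast_add {ν : ℝ} (hν : 0 ≤ ν) (m : ℕ) :
    Gamma (ν + 1) ≤ Gamma (m + ν + 1) := by
  induction m with
  | zero => simp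
  | succ n ih =>
    have hpos : 0 < (n : ℝ) + ν + 1 := by positivity
    rw [show ((n + 1 : ℕ) : ℝ) + ν + 1 = (n + ν + 1) + 1 by push_cast; ring,
      Gamma_add_one hpos.ne']
    nlinarith [Gamma_pos_of_pos hpos, (n.cast_nonneg : (0 : ℝ) ≤ n)]

lemma summable_abs_besselJCoeff_mul_pow {ν : ℝ} (hν : 0 ≤ ν) (R : ℝ) :
    Summable fun m => |besselJCoeff ν m| * R ^ m := by
  refine .of_norm_bounded ((Real.summable_pow_div_factorial |R|).mul_left (Gamma (ν + 1))⁻¹)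
    fun m => ?_
  have hΓ : 0 < Gamma (ν + 1) := Gamma_pos_of_pos (by positivity)
  have hfac : (0 : ℝ) < m.factorial := by exact_mod_cast m.factorial_pos
  rw [norm_mul, Real.norm_eq_abs, abs_abs, norm_pow, Real.norm_eq_abs, besselJCoeff, abs_div,
    abs_pow, abs_neg, abs_one, one_pow, abs_of_pos (by positivity)]
  calc 1 / (m.factorial * Gamma (m + ν + 1)) * |R| ^ m
      ≤ 1 / (m.factorial * Gamma (ν + 1)) * |R| ^ m := by
        gcongr
        exact Gamma_le_Gamma_natCast_add hν m
    _ = (Gamma (ν + 1))⁻¹ * (|R| ^ m / m.factorial) := by field_simp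

lemma besselJCoeff_succ_mul {ν : ℝ} (hν : -1 < ν) (m : ℕ) :
    besselJCoeff ν (m + 1) * ((m + 1) * (m + 1 + ν)) = -besselJCoeff ν m := by
  have hpos : 0 < (m : ℝ) + ν + 1 := by linarith [(m.cast_nonneg : (0 : ℝ) ≤ m)]
  have hΓ : 0 < Gamma (m + ν + 1) := Gamma_pos_of_pos hpos
  rw [besselJCoeff, besselJCoeff, show ((m + 1 : ℕ) : ℝ) + ν + 1 = (m + ν + 1) + 1 by
    push_cast; ring, Gamma_add_one hpos.ne', Nat.factorial_succ]
  push_cast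
  field_simp
  ring

lemma rpow_mul_besselJ_mul_rpow_eq_tsum {α ν κ c y : ℝ} (hα : α < 2)
    (hν : ν = (1 - α) / (2 - α)) (hκ : κ = (2 - α) / 2) (hc : 0 < c) (hy : 0 < y) :
    y ^ ((1 - α) / 2) * besselJ ν (c * y ^ κ) =
      ∑' m : ℕ, (c / 2) ^ ν * besselJCoeff ν m * ((c / 2) ^ 2) ^ m *
        y ^ ((1 - α) + (2 - α) * m) := by
  rw [besselJ, ← tsum_mul_left]
  refine tsum_congr fun m => ?_
  have hexp : (1 - α) / 2 + κ * (2 * m + ν) = (1 - α) + (2 - α) * m := by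
    have : 2 - α ≠ 0 := by linarith
    rw [hκ, hν]
    field_simp
    ring
  rw [show c * y ^ κ / 2 = c / 2 * y ^ κ by ring, mul_rpow (by positivity) (by positivity),
    ← rpow_mul hy.le, ← hexp, rpow_add hy, add_comm (2 * (m : ℝ)), rpow_add (by positivity),
    rpow_mul_natCast (by positivity), rpow_two, besselJCoeff]
  ring

theorem deriv_rpow_mul_deriv_rpow_mul_besselJ {α ν κ c x : ℝ} (hα : α ≤ 1)
    (hν : ν = (1 - α) / (2 - α)) (hκ : κ = (2 - α) / 2) (hc : 0 < c) (hx : 0 < x) :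
    deriv (fun y => y ^ α * deriv (fun z => z ^ ((1 - α) / 2) * besselJ ν (c * z ^ κ)) y) x =
      -((κ * c) ^ 2) * (x ^ ((1 - α) / 2) * besselJ ν (c * x ^ κ)) := by
  have h2α : 0 < 2 - α := by linarith
  have hν0 : 0 ≤ ν := hν ▸ div_nonneg (by linarith) h2α.le
  have hνα : 1 - α = (2 - α) * ν := by rw [hν]; field_simp
  refine deriv_rpow_mul_deriv_eq_neg_mul_of_eq_tsum
    (summable_abs_const_mul_mul_pow (summable_abs_besselJCoeff_mul_pow hν0) _ _)
    (fun y hy => rpow_mul_besselJ_mul_rpow_eq_tsum (by linarith) hν hκ hc hy) (fun m => ?_) hx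
  rw [hνα, hκ]
  linear_combination ((c / 2) ^ ν * ((c / 2) ^ 2) ^ (m + 1) * (2 - α) ^ 2) *
    besselJCoeff_succ_mul (ν := ν) (by linarith) m

theorem stmt_6_general (α ν κ : ℝ) (hα : α ∈ Set.Ioo (0:ℝ) 1)
    (hν : ν = (1 - α) / (2 - α)) (hκ : κ = (2 - α) / 2)
    (j : ℕ → ℝ)
    (hjpos : ∀ n, 1 ≤ n → 0 < j n)
    (ev : ℕ → ℝ) (hev : ∀ n, ev n = (κ * j n) ^ 2)
    (φ : ℕ → ℝ → ℝ)
    (hφ : ∀ n x, φ n x = Real.sqrt (2 * κ) * x ^ ((1 - α) / 2) *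
      besselJ ν (j n * x ^ κ) / deriv (besselJ ν) (j n)) :
    (∀ c : ℝ, 0 < c → ∀ x ∈ Set.Ioo (0:ℝ) 1,
      deriv (fun y : ℝ => y ^ α *
          deriv (fun z : ℝ => z ^ ((1 - α) / 2) * besselJ ν (c * z ^ κ)) y) x =
        -((κ * c) ^ 2) * (x ^ ((1 - α) / 2) * besselJ ν (c * x ^ κ))) ∧
    (∀ n, 1 ≤ n → ∀ x ∈ Set.Ioo (0:ℝ) 1,
      deriv (fun y : ℝ => y ^ α * deriv (φ n) y) x = -(ev n) * φ n x) := by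
  have hu := fun c (hc : 0 < c) x (hx : x ∈ Ioo (0 : ℝ) 1) =>
    deriv_rpow_mul_deriv_rpow_mul_besselJ hα.2.le hν hκ hc hx.1
  refine ⟨hu, fun n hn x hx => ?_⟩
  set C := √(2 * κ) / deriv (besselJ ν) (j n)
  have hφC : φ n = fun y => C * (y ^ ((1 - α) / 2) * besselJ ν (j n * y ^ κ)) := by
    funext y
    rw [hφ n y]
    ring
  have hflux : (fun y => y ^ α * deriv (φ n) y) = fun y => C * (y ^ α *
      deriv (fun z => z ^ ((1 - α) / 2) * besselJ ν (j n * z ^ κ)) y) := by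
    funext y
    rw [hφC, deriv_const_mul_field]
    ring
  rw [hflux, deriv_const_mul_field, hu (j n) (hjpos n hn) x hx, hev n, hφC]
  ring

/-- For every `c > 0`, the function `u(x) = x^((1-α)/2) J_ν(c x^κ)` satisfies the degenerate
eigenfunction equation `(x^α u'(x))' = -(κc)² u(x)` on `(0,1)`; in particular, with
`c = j_{ν,n}`, the eigenfunction `φ_n` satisfies `(x^α φ_n')' = -λ_n φ_n` on `(0,1)`. -/
theorem stmt_6 (α ν κ : ℝ) (hα : α ∈ Set.Ioo (0:ℝ) 1)
    (hν : ν = (1 - α) / (2 - α)) (hκ : κ = (2 - α) / 2)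
    (j : ℕ → ℝ)
    (hjpos : ∀ n, 1 ≤ n → 0 < j n)
    (hjmono : ∀ m n, 1 ≤ m → m < n → j m < j n)
    (hjzero : ∀ n, 1 ≤ n → besselJ ν (j n) = 0)
    (hjtop : Filter.Tendsto j Filter.atTop Filter.atTop)
    (ev : ℕ → ℝ) (hev : ∀ n, ev n = (κ * j n) ^ 2)
    (φ : ℕ → ℝ → ℝ)
    (hφ : ∀ n x, φ n x = Real.sqrt (2 * κ) * x ^ ((1 - α) / 2) *
      besselJ ν (j n * x ^ κ) / deriv (besselJ ν) (j n)) :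
    (∀ c : ℝ, 0 < c → ∀ x ∈ Set.Ioo (0:ℝ) 1,
      deriv (fun y : ℝ => y ^ α *
          deriv (fun z : ℝ => z ^ ((1 - α) / 2) * besselJ ν (c * z ^ κ)) y) x =
        -((κ * c) ^ 2) * (x ^ ((1 - α) / 2) * besselJ ν (c * x ^ κ))) ∧
    (∀ n, 1 ≤ n → ∀ x ∈ Set.Ioo (0:ℝ) 1,
      deriv (fun y : ℝ => y ^ α * deriv (φ n) y) x = -(ev n) * φ n x) :=
  stmt_6_general α ν κ hα hν hκ j hjpos ev hev φ hφ
end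

section
/- There exist constants C₁, C₂ > 0 and N ≥ 1 such that for all n ≥ N (in particular λ_n > λ), C₁ n^{−3/2} ≤ | J_ν( √(λ_n − λ)/κ ) | ≤ C₂ n^{−3/2}. -/
/-!
Write `J_ν(x) = (x/2)^ν G(x²/4)` with `G` entire. `G` solves `t G'' + (ν+1) G' + G = 0`, and
along any solution `t^(1+2ν) (G² + t G'²)` is nondecreasing. At a zero `T = j²/4` of `G` this
energy equals `T G'(T)²`, which bounds `G`, `G'` and hence (through the equation) `G''` on
`[T/2, T]`: `|G''| = O(|G'(T)| / √T)`. The evaluation point satisfies `x²/4 = T - μ` with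
`μ = λ / (4κ²)`, so Taylor's formula gives `G(T - μ) = -μ G'(T) + O(μ² |G'(T)| / √T)`, i.e.
`|J_ν(x)| ≍ μ |J_ν'(j)| / j`. The assumed bounds `|J_ν'(j_n)| ≍ j_n^(-1/2)` and `j_n ≍ n`
then give the rate `n^(-3/2)`.
-/

open Real Set

open scoped Nat

def derivCoeff (c : ℕ → ℝ) (m : ℕ) : ℝ := ((m : ℝ) + 1) * c (m + 1)

section TermwiseDerivative

variable {c : ℕ → ℝ} {K : ℝ}

lemma abs_derivCoeff_le (hc : ∀ m, |c m| ≤ K / m !) (m : ℕ) : |derivCoeff c m| ≤ K / m ! := by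
  rw [derivCoeff, abs_mul, abs_of_nonneg (by positivity)]
  calc ((m : ℝ) + 1) * |c (m + 1)| ≤ ((m : ℝ) + 1) * (K / (m + 1)!) := by gcongr; exact hc _
    _ = K / m ! := by rw [Nat.factorial_succ]; push_cast; field_simp

lemma abs_iterate_derivCoeff_le (hc : ∀ m, |c m| ≤ K / m !) (k m : ℕ) :
    |derivCoeff^[k] c m| ≤ K / m ! := by
  induction k generalizing m with
  | zero => exact hc m
  | succ k ih =>
    rw [Function.iterate_succ_apply']
    exact abs_derivCoeff_le ih m

lemma summable_mul_pow_of_abs_le (hc : ∀ m, |c m| ≤ K / m !) (t : ℝ) :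
    Summable fun m => c m * t ^ m := by
  refine .of_norm_bounded ((Real.summable_pow_div_factorial |t|).mul_left K) fun m => ?_
  calc ‖c m * t ^ m‖ = |c m| * |t| ^ m := by simp
    _ ≤ K / m ! * |t| ^ m := by gcongr; exact hc m
    _ = K * (|t| ^ m / m !) := by ring

lemma hasDerivAt_tsum_mul_pow (hc : ∀ m, |c m| ≤ K / m !) (t : ℝ) :
    HasDerivAt (fun s => ∑' m, c m * s ^ m) (∑' m, derivCoeff c m * t ^ m) t := by
  set R := |t| + 1
  have hR : 1 ≤ R := by simp [R]
  have hK : 0 ≤ K := by simpa using (abs_nonneg _).trans (hc 0)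
  have hbound : ∀ m y, y ∈ Metric.ball (0 : ℝ) R →
      ‖c m * ((m : ℝ) * y ^ (m - 1))‖ ≤ K * ((2 * R) ^ m / m !) := by
    intro m y hy
    have hy : |y| ≤ R := by simpa using (mem_ball_zero_iff.1 hy).le
    have hm : (m : ℝ) ≤ 2 ^ m := by exact_mod_cast (Nat.lt_two_pow_self (n := m)).le
    have hpow : |y| ^ (m - 1) ≤ R ^ m :=
      (pow_le_pow_left₀ (abs_nonneg _) hy _).trans (pow_le_pow_right₀ hR (Nat.sub_le m 1))
    calc ‖c m * ((m : ℝ) * y ^ (m - 1))‖ = |c m| * ((m : ℝ) * |y| ^ (m - 1)) := by simp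
      _ ≤ K / m ! * (2 ^ m * R ^ m) := by gcongr; exact hc m
      _ = K * ((2 * R) ^ m / m !) := by rw [mul_pow]; ring
  have key := hasDerivAt_tsum_of_isPreconnected
    ((Real.summable_pow_div_factorial (2 * R)).mul_left K) Metric.isOpen_ball
    (convex_ball (0 : ℝ) R).isPreconnected
    (fun m y _ => (hasDerivAt_pow m y).const_mul (c m)) hbound
    (Metric.mem_ball_self (by positivity)) (summable_mul_pow_of_abs_le hc 0)
    (show t ∈ Metric.ball (0 : ℝ) R by simp [R])
  refine key.congr_deriv ?_
  rw [tsum_eq_zero_add' ?_]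
  · simp [derivCoeff, mul_comm, mul_left_comm]
  · simpa [derivCoeff, mul_comm, mul_left_comm, mul_assoc] using
      summable_mul_pow_of_abs_le (abs_derivCoeff_le hc) t

lemma hasSum_natCast_mul_of_derivCoeff {t S : ℝ}
    (h : HasSum (fun m => derivCoeff c m * t ^ m) S) :
    HasSum (fun m : ℕ => ((m : ℝ) * c m) * t ^ m) (t * S) := by
  rw [← hasSum_nat_add_iff' 1]
  simpa [derivCoeff, pow_succ, mul_comm, mul_left_comm, mul_assoc] using h.mul_left t

end TermwiseDerivative

noncomputable def besselCoeff (ν : ℝ) (m : ℕ) : ℝ := (-1) ^ m / (m ! * Gamma (m + ν + 1))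

lemma factorial_mul_Gamma_le_Gamma_add {s : ℝ} (hs : 1 ≤ s) (m : ℕ) :
    m ! * Gamma s ≤ Gamma (m + s) := by
  induction m with
  | zero => simp
  | succ k ih =>
    rw [Nat.factorial_succ, Nat.cast_mul, Nat.cast_succ, add_right_comm,
      Gamma_add_one (by positivity), mul_assoc]
    gcongr

lemma abs_besselCoeff_le {ν : ℝ} (hν : 0 ≤ ν) (m : ℕ) :
    |besselCoeff ν m| ≤ (Gamma (ν + 1))⁻¹ / m ! := by
  have hΓ : 0 < Gamma (ν + 1) := Gamma_pos_of_pos (by linarith)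
  have hle : m ! * Gamma (ν + 1) ≤ Gamma (m + ν + 1) := by
    simpa [add_assoc] using factorial_mul_Gamma_le_Gamma_add (by linarith : 1 ≤ ν + 1) m
  have hfact : (1 : ℝ) ≤ m ! := by exact_mod_cast m.factorial_pos
  rw [besselCoeff, abs_div, abs_pow, abs_neg, abs_one, one_pow, abs_of_pos (by positivity),
    ← one_div, div_div, mul_comm (Gamma _)]
  gcongr
  nlinarith

lemma besselCoeff_rec {ν : ℝ} (hν : -1 < ν) (m : ℕ) :
    ((m : ℝ) + ν + 1) * derivCoeff (besselCoeff ν) m = -besselCoeff ν m := by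
  have hpos : 0 < (m : ℝ) + ν + 1 := by linarith [m.cast_nonneg (α := ℝ)]
  have hΓ : Gamma ((m : ℝ) + ν + 1) ≠ 0 := (Gamma_pos_of_pos hpos).ne'
  rw [derivCoeff, besselCoeff, besselCoeff, Nat.factorial_succ, Nat.cast_mul, Nat.cast_succ,
    add_right_comm _ 1 ν, Gamma_add_one hpos.ne', pow_succ]
  field_simp

/-- `besselG ν k` is the `k`-th derivative of the entire function `G(t) = ∑ₘ besselCoeff ν m tᵐ`,
for which `J_ν(x) = (x/2)^ν G(x²/4)` when `x > 0`. -/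
noncomputable def besselG (ν : ℝ) (k : ℕ) (t : ℝ) : ℝ :=
  ∑' m, derivCoeff^[k] (besselCoeff ν) m * t ^ m

section BesselG

variable {ν : ℝ}

lemma summable_besselG (hν : 0 ≤ ν) (k : ℕ) (t : ℝ) :
    Summable fun m => derivCoeff^[k] (besselCoeff ν) m * t ^ m :=
  summable_mul_pow_of_abs_le (abs_iterate_derivCoeff_le (abs_besselCoeff_le hν) k) t

lemma hasDerivAt_besselG (hν : 0 ≤ ν) (k : ℕ) (t : ℝ) :
    HasDerivAt (besselG ν k) (besselG ν (k + 1) t) t := by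
  unfold besselG
  rw [Function.iterate_succ_apply']
  exact hasDerivAt_tsum_mul_pow (abs_iterate_derivCoeff_le (abs_besselCoeff_le hν) k) t

lemma besselG_ode (hν : 0 ≤ ν) (t : ℝ) :
    t * besselG ν 2 t + (ν + 1) * besselG ν 1 t + besselG ν 0 t = 0 := by
  have h2 := hasSum_natCast_mul_of_derivCoeff (summable_besselG hν 2 t).hasSum
  have h1 := ((summable_besselG hν 1 t).hasSum).mul_left (ν + 1)
  have h0 := (summable_besselG hν 0 t).hasSum
  have hzero := (h2.add h1).add h0
  simp only [Function.iterate_zero, Function.iterate_one, id] at hzero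
  refine hzero.unique ?_
  convert hasSum_zero with m
  linear_combination t ^ m * besselCoeff_rec (by linarith) m

end BesselG

section BesselJ

variable {ν x : ℝ}

lemma besselJ_eq_rpow_mul_besselG (hx : 0 < x) :
    besselJ ν x = (x / 2) ^ ν * besselG ν 0 (x ^ 2 / 4) := by
  rw [besselJ, besselG, ← tsum_mul_left]
  refine tsum_congr fun m => ?_
  rw [rpow_add (by positivity), rpow_mul (by positivity), rpow_natCast, rpow_two,
    Function.iterate_zero, id, besselCoeff]
  ring

lemma abs_deriv_besselJ_of_besselJ_eq_zero (hν : 0 ≤ ν) (hx : 0 < x) (hzero : besselJ ν x = 0) :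
    besselG ν 0 (x ^ 2 / 4) = 0 ∧
      |deriv (besselJ ν) x| = (x / 2) ^ ν * (x / 2 * |besselG ν 1 (x ^ 2 / 4)|) := by
  have hpow : 0 < (x / 2) ^ ν := by positivity
  have hG : besselG ν 0 (x ^ 2 / 4) = 0 := by
    rw [besselJ_eq_rpow_mul_besselG hx] at hzero
    exact (mul_eq_zero.1 hzero).resolve_left hpow.ne'
  have hderiv : HasDerivAt (fun y => (y / 2) ^ ν * besselG ν 0 (y ^ 2 / 4))
      (ν * (x / 2) ^ (ν - 1) * (1 / 2) * besselG ν 0 (x ^ 2 / 4)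
        + (x / 2) ^ ν * (besselG ν 1 (x ^ 2 / 4) * (2 * x / 4))) x := by
    refine HasDerivAt.mul ?_ ((hasDerivAt_besselG hν 0 _).comp x ?_)
    · exact (hasDerivAt_rpow_const (Or.inl (by positivity))).comp x
        ((hasDerivAt_id x).div_const 2)
    · simpa using (hasDerivAt_pow 2 x).div_const 4
  have hJ : besselJ ν =ᶠ[nhds x] fun y => (y / 2) ^ ν * besselG ν 0 (y ^ 2 / 4) :=
    (eventually_gt_nhds hx).mono fun y hy => besselJ_eq_rpow_mul_besselG hy
  refine ⟨hG, ?_⟩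
  rw [(hderiv.congr_of_eventuallyEq hJ).deriv, hG, mul_zero, zero_add, abs_mul, abs_mul,
    abs_of_pos hpow, abs_of_pos (by positivity : 0 < 2 * x / 4)]
  ring

end BesselJ

lemma abs_sub_sub_mul_le_of_abs_deriv2_le {f f' f'' : ℝ → ℝ} {a b C : ℝ} (hab : a ≤ b)
    (hf : ∀ x ∈ Icc a b, HasDerivAt f (f' x) x) (hf' : ∀ x ∈ Icc a b, HasDerivAt f' (f'' x) x)
    (hC : ∀ x ∈ Icc a b, |f'' x| ≤ C) :
    |f a - f b - (a - b) * f' b| ≤ C * (b - a) ^ 2 := by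
  have hb : b ∈ Icc a b := right_mem_Icc.2 hab
  have hf'_lip : ∀ x ∈ Icc a b, ‖f' x - f' b‖ ≤ C * (b - a) := by
    intro x hx
    have := (convex_Icc a b).norm_image_sub_le_of_norm_hasDerivWithin_le
      (fun y hy => (hf' y hy).hasDerivWithinAt) hC hb hx
    refine this.trans (mul_le_mul_of_nonneg_left ?_ ((abs_nonneg _).trans (hC b hb)))
    rw [Real.norm_eq_abs, abs_sub_comm, abs_of_nonneg (by linarith [hx.2])]
    linarith [hx.1]
  have hψ : ∀ x ∈ Icc a b, HasDerivWithinAt (fun y => f y - (y - b) * f' b) (f' x - f' b)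
      (Icc a b) x := fun x hx =>
    ((hf x hx).sub (by simpa using ((hasDerivAt_id x).sub_const b).mul_const (f' b)))
      |>.hasDerivWithinAt
  have hmvt := (convex_Icc a b).norm_image_sub_le_of_norm_hasDerivWithin_le hψ hf'_lip hb
    (left_mem_Icc.2 hab)
  simp only [sub_self, zero_mul, sub_zero, Real.norm_eq_abs] at hmvt
  rwa [abs_sub_comm a b, abs_of_nonneg (sub_nonneg.2 hab), sub_right_comm, mul_assoc, ← sq]
    at hmvt

section BesselEquation

variable {ν : ℝ} {y y' y'' : ℝ → ℝ}

lemma monotoneOn_rpow_mul_energy (hν : -1 / 2 ≤ ν)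
    (hy : ∀ t, 0 < t → HasDerivAt y (y' t) t) (hy' : ∀ t, 0 < t → HasDerivAt y' (y'' t) t)
    (hode : ∀ t, 0 < t → t * y'' t + (ν + 1) * y' t + y t = 0) :
    MonotoneOn (fun t => t ^ (1 + 2 * ν) * (y t ^ 2 + t * y' t ^ 2)) (Ioi 0) := by
  have hderiv : ∀ t, 0 < t → HasDerivAt (fun t => t ^ (1 + 2 * ν) * (y t ^ 2 + t * y' t ^ 2))
      ((1 + 2 * ν) * t ^ (2 * ν) * y t ^ 2) t := by
    intro t ht
    have hE := ((hy t ht).fun_pow 2).fun_add ((hasDerivAt_id' t).fun_mul ((hy' t ht).fun_pow 2))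
    refine ((hasDerivAt_rpow_const (p := 1 + 2 * ν) (Or.inl ht.ne')).fun_mul hE).congr_deriv ?_
    rw [add_sub_cancel_left, rpow_add ht, rpow_one]
    linear_combination (2 * t ^ (2 * ν) * t * y' t) * hode t ht
  refine monotoneOn_of_hasDerivWithinAt_nonneg
    (f' := fun t => (1 + 2 * ν) * t ^ (2 * ν) * y t ^ 2) (convex_Ioi 0)
    (fun t ht => (hderiv t ht).continuousAt.continuousWithinAt) (fun t ht => ?_) (fun t ht => ?_)
  · rw [interior_Ioi] at ht
    exact (hderiv t ht).hasDerivWithinAt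
  · rw [interior_Ioi] at ht
    exact mul_nonneg (mul_nonneg (by linarith) (rpow_nonneg ht.le _)) (sq_nonneg _)

lemma energy_le_of_mem_Icc (hν : -1 / 2 ≤ ν) (hν1 : ν ≤ 1)
    (hy : ∀ t, 0 < t → HasDerivAt y (y' t) t) (hy' : ∀ t, 0 < t → HasDerivAt y' (y'' t) t)
    (hode : ∀ t, 0 < t → t * y'' t + (ν + 1) * y' t + y t = 0) {s T : ℝ} (hT : 0 < T)
    (hs : T / 2 ≤ s) (hsT : s ≤ T) :
    y s ^ 2 + s * y' s ^ 2 ≤ 8 * (y T ^ 2 + T * y' T ^ 2) := by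
  have hs0 : 0 < s := by linarith
  have hp : 0 ≤ 1 + 2 * ν := by linarith
  have hmono := monotoneOn_rpow_mul_energy hν hy hy' hode (mem_Ioi.2 hs0) (mem_Ioi.2 hT) hsT
  have hratio : (T / s) ^ (1 + 2 * ν) ≤ 8 :=
    calc (T / s) ^ (1 + 2 * ν) ≤ 2 ^ (1 + 2 * ν) :=
          rpow_le_rpow (by positivity) ((div_le_iff₀ hs0).2 (by linarith)) hp
      _ ≤ 2 ^ (3 : ℝ) := rpow_le_rpow_of_exponent_le (by norm_num) (by linarith)
      _ = 8 := by norm_num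
  calc y s ^ 2 + s * y' s ^ 2 ≤ (T / s) ^ (1 + 2 * ν) * (y T ^ 2 + T * y' T ^ 2) := by
        rw [div_rpow hT.le hs0.le, div_mul_eq_mul_div, le_div_iff₀ (by positivity), mul_comm]
        exact hmono
    _ ≤ 8 * (y T ^ 2 + T * y' T ^ 2) := by gcongr

lemma abs_deriv2_le_of_apply_eq_zero (hν : -1 / 2 ≤ ν) (hν1 : ν ≤ 1)
    (hy : ∀ t, 0 < t → HasDerivAt y (y' t) t) (hy' : ∀ t, 0 < t → HasDerivAt y' (y'' t) t)
    (hode : ∀ t, 0 < t → t * y'' t + (ν + 1) * y' t + y t = 0) {r s : ℝ} (hr : 8 ≤ r)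
    (hzero : y (r ^ 2) = 0) (hs : r ^ 2 / 2 ≤ s) (hsr : s ≤ r ^ 2) :
    |y'' s| ≤ 8 * |y' (r ^ 2)| / r := by
  set g := |y' (r ^ 2)|
  have hg : 0 ≤ g := abs_nonneg _
  have hs0 : 0 < s := by nlinarith
  have hE : y s ^ 2 + s * y' s ^ 2 ≤ 8 * (r ^ 2 * g ^ 2) := by
    simpa [hzero, g, sq_abs] using
      energy_le_of_mem_Icc hν hν1 hy hy' hode (by positivity) hs hsr
  have hy_le : |y s| ≤ 3 * r * g := abs_le_of_sq_le_sq (by nlinarith) (by positivity)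
  have hy'_le : |y' s| ≤ 4 * g := abs_le_of_sq_le_sq
    (by nlinarith [mul_le_mul_of_nonneg_right hs (sq_nonneg (y' s)), sq_nonneg (y s)])
    (by positivity)
  have hsy'' : s * |y'' s| ≤ 4 * r * g := by
    have hode_s : s * y'' s = -((ν + 1) * y' s + y s) := by linarith [hode s hs0]
    calc s * |y'' s| = |(ν + 1) * y' s + y s| := by
          rw [← abs_neg ((ν + 1) * y' s + y s), ← hode_s, abs_mul, abs_of_pos hs0]
      _ ≤ |(ν + 1) * y' s| + |y s| := abs_add_le _ _
      _ = (ν + 1) * |y' s| + |y s| := by rw [abs_mul, abs_of_nonneg (by linarith : 0 ≤ ν + 1)]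
      _ ≤ 2 * (4 * g) + 3 * r * g := by gcongr; linarith
      _ ≤ 4 * r * g := by nlinarith
  rw [le_div_iff₀ (by positivity)]
  nlinarith [abs_nonneg (y'' s)]

lemma abs_apply_sub_bounds_of_apply_eq_zero (hν : -1 / 2 ≤ ν) (hν1 : ν ≤ 1)
    (hy : ∀ t, 0 < t → HasDerivAt y (y' t) t) (hy' : ∀ t, 0 < t → HasDerivAt y' (y'' t) t)
    (hode : ∀ t, 0 < t → t * y'' t + (ν + 1) * y' t + y t = 0) {r μ : ℝ} (hr : 8 ≤ r)
    (hμ : 0 < μ) (hμr : 32 * μ ≤ r) (hzero : y (r ^ 2) = 0) :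
    μ * |y' (r ^ 2)| / 2 ≤ |y (r ^ 2 - μ)| ∧ |y (r ^ 2 - μ)| ≤ 2 * (μ * |y' (r ^ 2)|) := by
  have hg : 0 ≤ |y' (r ^ 2)| := abs_nonneg _
  have hμr2 : μ ≤ r ^ 2 / 2 := by nlinarith
  have hpos : ∀ t ∈ Icc (r ^ 2 - μ) (r ^ 2), 0 < t := fun t ht => by nlinarith [ht.1]
  have htaylor := abs_sub_sub_mul_le_of_abs_deriv2_le (by linarith : r ^ 2 - μ ≤ r ^ 2)
    (fun t ht => hy t (hpos t ht)) (fun t ht => hy' t (hpos t ht))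
    (fun t ht => abs_deriv2_le_of_apply_eq_zero hν hν1 hy hy' hode hr hzero
      (by linarith [ht.1]) ht.2)
  rw [hzero, sub_zero, sub_sub_cancel_left, neg_mul, sub_neg_eq_add] at htaylor
  have hremainder :
      8 * |y' (r ^ 2)| / r * (r ^ 2 - (r ^ 2 - μ)) ^ 2 ≤ μ * |y' (r ^ 2)| / 4 := by
    rw [sub_sub_cancel, div_mul_eq_mul_div, div_le_iff₀ (by positivity)]
    nlinarith [mul_nonneg (mul_nonneg hμ.le hg) (sub_nonneg.2 hμr)]
  have hμg : |μ * y' (r ^ 2)| = μ * |y' (r ^ 2)| := by rw [abs_mul, abs_of_pos hμ]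
  have h₁ := abs_sub_abs_le_abs_sub (y (r ^ 2 - μ)) (-(μ * y' (r ^ 2)))
  have h₂ := abs_sub_abs_le_abs_sub (μ * y' (r ^ 2)) (-y (r ^ 2 - μ))
  rw [sub_neg_eq_add, abs_neg] at h₁ h₂
  rw [add_comm] at h₂
  constructor <;> linarith

end BesselEquation

lemma rpow_div_two_le_div_two_rpow {a ν : ℝ} (ha : 0 ≤ a) (hν1 : ν ≤ 1) :
    a ^ ν / 2 ≤ (a / 2) ^ ν := by
  rw [div_rpow ha zero_le_two]
  refine div_le_div_of_nonneg_left (by positivity) (by positivity) ?_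
  simpa using rpow_le_rpow_of_exponent_le one_le_two hν1

lemma abs_besselJ_sqrt_sub_bounds {ν x₀ μ : ℝ} (hν0 : 0 ≤ ν) (hν1 : ν ≤ 1) (hx₀ : 16 ≤ x₀)
    (hμ : 0 < μ) (hμx₀ : 64 * μ ≤ x₀) (hzero : besselJ ν x₀ = 0) :
    μ / 2 * (|deriv (besselJ ν) x₀| / x₀) ≤ |besselJ ν √(x₀ ^ 2 - 4 * μ)| ∧
      |besselJ ν √(x₀ ^ 2 - 4 * μ)| ≤ 4 * μ * (|deriv (besselJ ν) x₀| / x₀) := by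
  obtain ⟨r, rfl⟩ : ∃ r, x₀ = 2 * r := ⟨x₀ / 2, by ring⟩
  set x := √((2 * r) ^ 2 - 4 * μ)
  have hr : 0 < r := by linarith
  obtain ⟨hG, hderiv⟩ := abs_deriv_besselJ_of_besselJ_eq_zero hν0 (by linarith) hzero
  rw [show (2 * r) ^ 2 / 4 = r ^ 2 by ring] at hG hderiv
  rw [mul_div_cancel_left₀ r two_ne_zero] at hderiv
  obtain ⟨hlow, hup⟩ := abs_apply_sub_bounds_of_apply_eq_zero (y' := besselG ν 1) (by linarith) hν1
    (fun t _ => hasDerivAt_besselG hν0 0 t) (fun t _ => hasDerivAt_besselG hν0 1 t)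
    (fun t _ => besselG_ode hν0 t) (by linarith : 8 ≤ r) hμ (by linarith : 32 * μ ≤ r) hG
  have hx_sq : x ^ 2 = (2 * r) ^ 2 - 4 * μ := sq_sqrt (by nlinarith)
  have hx_ge : r ≤ x := le_sqrt_of_sq_le (by nlinarith)
  have hx_le : x ≤ 2 * r := (sqrt_le_sqrt (by linarith)).trans_eq (sqrt_sq (by linarith))
  have hJ : |besselJ ν x| = (x / 2) ^ ν * |besselG ν 0 (r ^ 2 - μ)| := by
    rw [besselJ_eq_rpow_mul_besselG (by linarith), hx_sq, abs_mul,
      abs_of_pos (rpow_pos_of_pos (by linarith) _)]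
    congr 3
    ring
  have hB_le : (x / 2) ^ ν ≤ r ^ ν := rpow_le_rpow (by linarith) (by linarith) hν0
  have hB_ge : r ^ ν / 2 ≤ (x / 2) ^ ν :=
    (rpow_div_two_le_div_two_rpow (by linarith) hν1).trans
      (rpow_le_rpow (by linarith) (by linarith) hν0)
  have hD : |deriv (besselJ ν) (2 * r)| / (2 * r) = r ^ ν * |besselG ν 1 (r ^ 2)| / 2 := by
    rw [hderiv]; field_simp
  rw [hJ, hD]
  constructor
  · calc μ / 2 * (r ^ ν * |besselG ν 1 (r ^ 2)| / 2)
        = r ^ ν / 2 * (μ * |besselG ν 1 (r ^ 2)| / 2) := by ring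
      _ ≤ (x / 2) ^ ν * |besselG ν 0 (r ^ 2 - μ)| := by gcongr
  · calc (x / 2) ^ ν * |besselG ν 0 (r ^ 2 - μ)|
        ≤ r ^ ν * (2 * (μ * |besselG ν 1 (r ^ 2)|)) :=
          mul_le_mul hB_le hup (abs_nonneg _) (rpow_nonneg hr.le _)
      _ = 4 * μ * (r ^ ν * |besselG ν 1 (r ^ 2)| / 2) := by ring

lemma le_and_le_five_mul_of_abs_sub_pi_mul_le {n j ν C : ℝ} (hν0 : 0 ≤ ν) (hν1 : ν ≤ 1)
    (hn : 1 ≤ n) (hnC : C + 2 ≤ n) (h : |j - π * (n + ν / 2 - 1 / 4)| ≤ C / n) :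
    n ≤ j ∧ j ≤ 5 * n := by
  have hC : 0 ≤ C := by
    simpa using (le_div_iff₀ (by linarith : 0 < n)).1 ((abs_nonneg _).trans h)
  have hCn : C / n ≤ C := div_le_self hC hn
  have hπ₃ := pi_gt_three
  have hπ₄ := pi_le_four
  rw [abs_le] at h
  constructor <;> nlinarith

lemma bounds_div_of_bounds_div_sqrt {n j d c₁ c₂ : ℝ} (hn : 0 < n) (hnj : n ≤ j)
    (hjn : j ≤ 5 * n) (hc₁ : 0 ≤ c₁) (hc₂ : 0 ≤ c₂) (h₁ : c₁ / √j ≤ d) (h₂ : d ≤ c₂ / √j) :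
    c₁ / (5 * √5) / n ^ (3 / 2 : ℝ) ≤ d / j ∧ d / j ≤ c₂ / n ^ (3 / 2 : ℝ) := by
  have hj : 0 < j := hn.trans_le hnj
  have hpow : n ^ (3 / 2 : ℝ) = √n * n := by
    rw [show (3 / 2 : ℝ) = 1 / 2 + 1 by norm_num, rpow_add hn, rpow_one, sqrt_eq_rpow]
  rw [hpow]
  constructor
  · calc c₁ / (5 * √5) / (√n * n) = c₁ / (√(5 * n) * (5 * n)) := by
          rw [sqrt_mul (by norm_num)]; field_simp
      _ ≤ c₁ / (√j * j) := by gcongr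
      _ ≤ d / j := by rw [← div_div]; gcongr
  · calc d / j ≤ c₂ / (√j * j) := by rw [← div_div]; gcongr
      _ ≤ c₂ / (√n * n) := by gcongr

theorem stmt_11_general (α ν κ : ℝ) (hα : α ∈ Set.Ioo (0:ℝ) 1)
    (hν : ν = (1 - α) / (2 - α)) (hκ : κ = (2 - α) / 2)
    (j : ℕ → ℝ)
    (hjzero : ∀ n, 1 ≤ n → besselJ ν (j n) = 0)
    (hasym : ∃ C : ℝ, ∀ n : ℕ, 1 ≤ n →
      |j n - Real.pi * ((n : ℝ) + ν / 2 - 1 / 4)| ≤ C / (n : ℝ))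
    (hder : ∃ c₁ > (0:ℝ), ∃ c₂ > (0:ℝ), ∀ n, 1 ≤ n →
      c₁ / Real.sqrt (j n) ≤ |deriv (besselJ ν) (j n)| ∧
      |deriv (besselJ ν) (j n)| ≤ c₂ / Real.sqrt (j n))
    (ev : ℕ → ℝ) (hev : ∀ n, ev n = (κ * j n) ^ 2)
    (lam : ℝ) (hlam : 0 < lam) :
    ∃ C₁ > (0:ℝ), ∃ C₂ > (0:ℝ), ∃ N : ℕ, 1 ≤ N ∧ ∀ n, N ≤ n →
      lam < ev n ∧
      C₁ / (n : ℝ) ^ ((3:ℝ) / 2) ≤ |besselJ ν (Real.sqrt (ev n - lam) / κ)| ∧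
      |besselJ ν (Real.sqrt (ev n - lam) / κ)| ≤ C₂ / (n : ℝ) ^ ((3:ℝ) / 2) := by
  obtain ⟨hα₀, hα₁⟩ := hα
  have hν₀ : 0 ≤ ν := by rw [hν]; exact div_nonneg (by linarith) (by linarith)
  have hν₁ : ν ≤ 1 := by rw [hν, div_le_one (by linarith)]; linarith
  have hκ₀ : 0 < κ := by rw [hκ]; linarith
  set μ := lam / (4 * κ ^ 2)
  have hμ : 0 < μ := by positivity
  obtain ⟨C, hC⟩ := hasym
  obtain ⟨c₁, hc₁, c₂, hc₂, hd⟩ := hder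
  refine ⟨μ / 2 * (c₁ / (5 * √5)), by positivity, 4 * μ * c₂, by positivity,
    ⌈C⌉₊ + ⌈16 + 64 * μ⌉₊ + 1, by omega, fun n hn => ?_⟩
  have hn₁ : 1 ≤ n := by omega
  have hn : (⌈C⌉₊ : ℝ) + ⌈16 + 64 * μ⌉₊ + 1 ≤ n := by exact_mod_cast hn
  have hCn := Nat.le_ceil C
  have hμn := Nat.le_ceil (16 + 64 * μ)
  obtain ⟨hnj, hjn⟩ := le_and_le_five_mul_of_abs_sub_pi_mul_le hν₀ hν₁ (by linarith)
    (by linarith) (hC n hn₁)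
  have hlam_eq : 4 * κ ^ 2 * μ = lam := by simp only [μ]; field_simp
  have hev_sub : ev n - lam = κ ^ 2 * (j n ^ 2 - 4 * μ) := by rw [hev n, ← hlam_eq]; ring
  have hpoint : √(ev n - lam) / κ = √(j n ^ 2 - 4 * μ) := by
    rw [hev_sub, sqrt_mul (sq_nonneg κ), sqrt_sq hκ₀.le, mul_div_cancel_left₀ _ hκ₀.ne']
  obtain ⟨hlow, hup⟩ := abs_besselJ_sqrt_sub_bounds hν₀ hν₁ (by linarith) hμ (by linarith)
    (hjzero n hn₁)
  obtain ⟨hd₁, hd₂⟩ := bounds_div_of_bounds_div_sqrt (by linarith) hnj hjn hc₁.le hc₂.le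
    (hd n hn₁).1 (hd n hn₁).2
  refine ⟨sub_pos.1 (hev_sub ▸ mul_pos (by positivity) (by nlinarith)), ?_, ?_⟩ <;>
    rw [hpoint, mul_div_assoc]
  · exact (mul_le_mul_of_nonneg_left hd₁ (by positivity)).trans hlow
  · exact hup.trans (mul_le_mul_of_nonneg_left hd₂ (by positivity))

/-- There exist `C₁, C₂ > 0` and `N ≥ 1` such that for all `n ≥ N` (in particular `λ_n > λ`),
`C₁ n^(-3/2) ≤ |J_ν(√(λ_n - λ)/κ)| ≤ C₂ n^(-3/2)`. -/
theorem stmt_11 (α ν κ : ℝ) (hα : α ∈ Set.Ioo (0:ℝ) 1)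
    (hν : ν = (1 - α) / (2 - α)) (hκ : κ = (2 - α) / 2)
    (j : ℕ → ℝ)
    (hjpos : ∀ n, 1 ≤ n → 0 < j n)
    (hjmono : ∀ m n, 1 ≤ m → m < n → j m < j n)
    (hjzero : ∀ n, 1 ≤ n → besselJ ν (j n) = 0)
    (hjtop : Filter.Tendsto j Filter.atTop Filter.atTop)
    (hasym : ∃ C : ℝ, ∀ n : ℕ, 1 ≤ n →
      |j n - Real.pi * ((n : ℝ) + ν / 2 - 1 / 4)| ≤ C / (n : ℝ))
    (hder : ∃ c₁ > (0:ℝ), ∃ c₂ > (0:ℝ), ∀ n, 1 ≤ n →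
      c₁ / Real.sqrt (j n) ≤ |deriv (besselJ ν) (j n)| ∧
      |deriv (besselJ ν) (j n)| ≤ c₂ / Real.sqrt (j n))
    (ev : ℕ → ℝ) (hev : ∀ n, ev n = (κ * j n) ^ 2)
    (lam : ℝ) (hlam : 0 < lam)
    (hnr1 : ∀ n, 1 ≤ n → lam ≠ ev n)
    (hnr2 : ∀ n k, 1 ≤ n → 1 ≤ k → lam - ev n ≠ ev k) :
    ∃ C₁ > (0:ℝ), ∃ C₂ > (0:ℝ), ∃ N : ℕ, 1 ≤ N ∧ ∀ n, N ≤ n →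
      lam < ev n ∧
      C₁ / (n : ℝ) ^ ((3:ℝ) / 2) ≤ |besselJ ν (Real.sqrt (ev n - lam) / κ)| ∧
      |besselJ ν (Real.sqrt (ev n - lam) / κ)| ≤ C₂ / (n : ℝ) ^ ((3:ℝ) / 2) :=
  stmt_11_general α ν κ hα hν hκ j hjzero hasym hder ev hev lam hlam
end

section
/- There exists a constant C > 0 such that for every integer k ≥ 1, Σ_{n ≥ 1, n ≠ k} n²/(k² − n²)² ≤ C. -/
open MeasureTheory Real Set

/-- There exists `C > 0` such that for every integer `k ≥ 1`,
`∑_{n ≥ 1, n ≠ k} n²/(k² - n²)² ≤ C`. -/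
theorem stmt_14 : ∃ C > (0:ℝ), ∀ k : ℕ, 1 ≤ k →
    ∑' n : {n : ℕ // 1 ≤ n ∧ n ≠ k},
      (((n : ℕ) : ℝ)) ^ 2 / (((k : ℝ)) ^ 2 - ((n : ℕ) : ℝ) ^ 2) ^ 2 ≤ C := by
  have hg : Summable (fun m : ℤ => 1 / (m:ℝ)^2) :=
    (Real.summable_one_div_int_pow).mpr one_lt_two
  refine ⟨∑' m : ℤ, 1 / (m:ℝ)^2, ?_, ?_⟩
  · exact Summable.tsum_pos hg (fun m => by positivity) 1 (by norm_num)
  · intro k hk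
    set i : {n : ℕ // 1 ≤ n ∧ n ≠ k} → ℤ := fun n => (n : ℤ) - k with hidef
    have hi : Function.Injective i := by
      intro a b hab
      simp only [hidef, sub_left_inj, Int.natCast_inj] at hab
      exact Subtype.ext hab
    have hbound : ∀ n : {n : ℕ // 1 ≤ n ∧ n ≠ k},
        ((n:ℕ):ℝ)^2 / ((k:ℝ)^2 - ((n:ℕ):ℝ)^2)^2 ≤ 1 / (((i n):ℤ):ℝ)^2 := by
      rintro ⟨n, hn1, hnk⟩
      have ha : ((n:ℝ) - k) ≠ 0 := by
        intro h
        apply hnk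
        have : (n:ℝ) = k := by linarith
        exact_mod_cast this
      have hn1' : (1:ℝ) ≤ n := by exact_mod_cast hn1
      have hk1' : (1:ℝ) ≤ k := by exact_mod_cast hk
      have key : ((k:ℝ)^2 - (n:ℝ)^2)^2 = ((n:ℝ)-k)^2 * ((n:ℝ)+k)^2 := by ring
      have h1 : ((n:ℝ))^2 ≤ ((n:ℝ)+k)^2 := by nlinarith
      have ha2 : (0:ℝ) < ((n:ℝ)-k)^2 := by positivity
      have hb2 : (0:ℝ) < ((n:ℝ)+k)^2 := by positivity
      have hcast : (((i ⟨n, hn1, hnk⟩ :ℤ)):ℝ) = (n:ℝ) - k := by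
        simp [hidef]
      rw [hcast, key]
      calc (n:ℝ)^2 / (((n:ℝ)-k)^2 * ((n:ℝ)+k)^2)
          ≤ ((n:ℝ)+k)^2 / (((n:ℝ)-k)^2 * ((n:ℝ)+k)^2) := by gcongr
        _ = 1 / ((n:ℝ)-k)^2 := by field_simp
    have hf : Summable (fun n : {n : ℕ // 1 ≤ n ∧ n ≠ k} =>
        ((n:ℕ):ℝ)^2 / ((k:ℝ)^2 - ((n:ℕ):ℝ)^2)^2) := by
      apply Summable.of_nonneg_of_le (fun n => by positivity) hbound
      exact hg.comp_injective hi
    exact Summable.tsum_le_tsum_of_inj i hi (fun c _ => by positivity) hbound hf hg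
end

section
/- Let (μ_n)_{n≥1} be a strictly increasing sequence of positive real numbers and let (a_n)_{n≥1} be a real sequence with Σ_{n≥1} |a_n| < ∞. If Σ_{n≥1} a_n μ_n^{−p} = 0 for every integer p ≥ 0, then a_n = 0 for every n ≥ 1. (This is the entire-function uniqueness argument: the entire function G(z) = Σ a_n e^{z/μ_n} has all derivatives vanishing at 0, hence vanishes identically, which forces all coefficients to vanish.) -/
open Filter

/-- **Entire-function uniqueness argument**: if `(μ_n)` is a strictly increasing sequence of
positive reals, `(a_n)` is absolutely summable, and `∑_n a_n μ_n^(-p) = 0` for every integer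
`p ≥ 0`, then all `a_n` vanish. (The entire function `G(z) = ∑ a_n e^(z/μ_n)` has all
derivatives vanishing at `0`, hence vanishes identically, forcing every coefficient to be
zero.) -/
theorem stmt_19 (μ : ℕ → ℝ) (hμpos : ∀ n, 0 < μ n) (hμmono : StrictMono μ)
    (a : ℕ → ℝ) (ha : Summable fun n => |a n|)
    (hvanish : ∀ p : ℕ, ∑' n, a n / (μ n) ^ p = 0) :
    ∀ n, a n = 0 := by
  intro n
  induction n using Nat.strong_induction_on with
  | _ n ih =>
  set r : ℝ := μ n / μ (n + 1) with hr_def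
  have hr0 : 0 ≤ r := le_of_lt (div_pos (hμpos n) (hμpos (n + 1)))
  have hr1 : r < 1 := (div_lt_one (hμpos (n + 1))).2 (hμmono (Nat.lt_succ_self n))
  have htail : Summable fun k => |a (k + (n + 1))| :=
    (summable_nat_add_iff (f := fun m => |a m|) (n + 1)).2 ha
  set C : ℝ := ∑' k, |a (k + (n + 1))| with hC_def
  have hC0 : 0 ≤ C := tsum_nonneg fun k => abs_nonneg _
  -- key bound for each p
  have key : ∀ p : ℕ, |a n| ≤ C * r ^ p := by
    intro p
    have hsum : Summable fun k => a k * (μ n / μ k) ^ p := by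
      apply Summable.of_abs
      refine Summable.of_nonneg_of_le (fun k => abs_nonneg _) (fun k => ?_)
        (ha.mul_right ((μ n / μ 0) ^ p))
      · rw [abs_mul]
        apply mul_le_mul_of_nonneg_left _ (abs_nonneg _)
        rw [abs_pow]
        apply pow_le_pow_left₀ (abs_nonneg _)
        rw [abs_of_nonneg (le_of_lt (div_pos (hμpos n) (hμpos k)))]
        exact div_le_div_of_nonneg_left (le_of_lt (hμpos n)) (hμpos 0)
          (hμmono.monotone (Nat.zero_le k))
    have hS : ∑' k, a k * (μ n / μ k) ^ p = 0 := by
      calc ∑' k, a k * (μ n / μ k) ^ p = ∑' k, (μ n) ^ p * (a k / μ k ^ p) := by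
            congr 1; ext k; rw [div_pow]; ring
        _ = (μ n) ^ p * ∑' k, a k / μ k ^ p := tsum_mul_left
        _ = 0 := by rw [hvanish p, mul_zero]
    have hsplit := Summable.sum_add_tsum_nat_add (f := fun k => a k * (μ n / μ k) ^ p) (n + 1) hsum
    have hfin : ∑ k ∈ Finset.range (n + 1), a k * (μ n / μ k) ^ p = a n := by
      rw [Finset.sum_range_succ]
      have : ∑ k ∈ Finset.range n, a k * (μ n / μ k) ^ p = 0 := by
        apply Finset.sum_eq_zero
        intro k hk
        rw [ih k (Finset.mem_range.1 hk), zero_mul]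
      rw [this, zero_add, div_self (ne_of_gt (hμpos n)), one_pow, mul_one]
    have han : a n = - ∑' k, a (k + (n + 1)) * (μ n / μ (k + (n + 1))) ^ p := by
      have := hsplit
      rw [hS, hfin] at this
      linarith
    rw [han, abs_neg]
    have hterm : ∀ k, |a (k + (n + 1)) * (μ n / μ (k + (n + 1))) ^ p|
        ≤ |a (k + (n + 1))| * r ^ p := by
      intro k
      rw [abs_mul, abs_pow]
      apply mul_le_mul_of_nonneg_left _ (abs_nonneg _)
      apply pow_le_pow_left₀ (abs_nonneg _)
      rw [abs_of_nonneg (le_of_lt (div_pos (hμpos n) (hμpos _)))]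
      exact div_le_div_of_nonneg_left (le_of_lt (hμpos n)) (hμpos (n + 1))
        (hμmono.monotone (by omega))
    calc |∑' k, a (k + (n + 1)) * (μ n / μ (k + (n + 1))) ^ p|
        ≤ ∑' k, |a (k + (n + 1)) * (μ n / μ (k + (n + 1))) ^ p| := by
          have := norm_tsum_le_tsum_norm (f := fun k => a (k + (n + 1)) * (μ n / μ (k + (n + 1))) ^ p)
            (by simp only [Real.norm_eq_abs]; exact ((summable_nat_add_iff (f := fun k => a k * (μ n / μ k) ^ p) (n + 1)).2 hsum).abs)
          simp only [Real.norm_eq_abs] at this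
          exact this
      _ ≤ ∑' k, |a (k + (n + 1))| * r ^ p := by
          apply Summable.tsum_le_tsum hterm
          · exact ((summable_nat_add_iff (f := fun k => a k * (μ n / μ k) ^ p) (n + 1)).2 hsum).abs
          · exact htail.mul_right _
      _ = C * r ^ p := tsum_mul_right
  have hlim : Tendsto (fun p : ℕ => C * r ^ p) atTop (nhds 0) := by
    have := tendsto_pow_atTop_nhds_zero_of_lt_one hr0 hr1
    simpa using this.const_mul C
  have : |a n| ≤ 0 := ge_of_tendsto' hlim key
  exact abs_eq_zero.1 (le_antisymm this (abs_nonneg _))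
end
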